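/- Let d ≥ 1, α ∈ (0,3), ε ∈ (0,α), ϱ > 0 and δ ∈ (0, 1/4]. For every bounded function f : ℝ^d → ℝ one has |f|_{B(0,2),α−ε,ϱ} ≤ δ |f|_{B(0,2),α,ϱ} + 8 · 2^ϱ · δ^{−α/ε} ‖f‖_∞, where for σ ∈ (0,3) and κ > 0 the seminorm is |f|_{B(0,2),σ,κ} := sup_{x ∈ B(0,2)} sup_{0<|h| ≤ r_x/4} r_x^{κ+σ} |Δ_h^3 f(x)|/|h|^σ with r_x := 2 − |x| the distance of x to the complement of B(0,2). -/

import Mathlib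

open MeasureTheory ENNReal Metric Set Filter Topology

noncomputable section

/-- Euclidean space ℝ^d. -/
abbrev Ed (d : ℕ) := EuclideanSpace ℝ (Fin d)

/-- First difference operator `Δ_h f (x) = f (x+h) - f x`. -/
def deltaOp {E : Type*} [Add E] (h : E) (f : E → ℝ) : E → ℝ := fun x => f (x + h) - f x

/-- Iterated difference operator `Δ_h^n`. -/
def iterDelta {E : Type*} [Add E] (h : E) (n : ℕ) (f : E → ℝ) : E → ℝ := (deltaOp h)^[n] f

/-- The weighted seminorm `|f|_{B(0,2),σ,κ}` from (3.10): with `r_x = 2 - |x|`,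
`|f|_{B(0,2),σ,κ} = sup_{x ∈ B(0,2)} sup_{0<|h|≤r_x/4} r_x^{κ+σ} |Δ_h^3 f(x)|/|h|^σ`. -/
def weightedSeminorm {d : ℕ} (σ κ : ℝ) (f : Ed d → ℝ) : ℝ≥0∞ :=
  ⨆ (x : Ed d) (_ : ‖x‖ < 2) (h : Ed d) (_ : 0 < ‖h‖) (_ : ‖h‖ ≤ (2 - ‖x‖) / 4),
    ENNReal.ofReal ((2 - ‖x‖) ^ (κ + σ) * |iterDelta h 3 f x| / ‖h‖ ^ σ)

/-!
The estimate is pointwise in `(x, h)`. With `u = |h| / r_x`, the `(α - ε)`-quotient is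
`u^ε` times the `α`-quotient. If `u^ε ≤ δ` this gives the first term; otherwise
`u^{ε-α} ≤ δ^{(ε-α)/ε} ≤ δ^{-α/ε}`, and `r_x^ϱ ≤ 2^ϱ`, `|Δ_h^3 f| ≤ 2^3 ‖f‖_∞` give the second.
-/

section IterDelta

variable {E : Type*} [Add E]

theorem iterDelta_succ (h : E) (n : ℕ) (f : E → ℝ) :
    iterDelta h (n + 1) f = deltaOp h (iterDelta h n f) :=
  Function.iterate_succ_apply' _ n f

theorem ofReal_abs_deltaOp_le (h : E) (g : E → ℝ) (x : E) :
    ENNReal.ofReal |deltaOp h g x| ≤ ENNReal.ofReal |g (x + h)| + ENNReal.ofReal |g x| :=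
  (ENNReal.ofReal_le_ofReal (abs_sub _ _)).trans ENNReal.ofReal_add_le

theorem ofReal_abs_iterDelta_le (h : E) (n : ℕ) (f : E → ℝ) (x : E) :
    ENNReal.ofReal |iterDelta h n f x| ≤ 2 ^ n * ⨆ z, ENNReal.ofReal |f z| := by
  induction n generalizing x with
  | zero => simpa [iterDelta] using le_iSup (fun z => ENNReal.ofReal |f z|) x
  | succ n ih =>
    calc ENNReal.ofReal |iterDelta h (n + 1) f x|
        ≤ ENNReal.ofReal |iterDelta h n f (x + h)| + ENNReal.ofReal |iterDelta h n f x| := by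
          rw [iterDelta_succ]
          exact ofReal_abs_deltaOp_le h _ x
      _ ≤ 2 ^ n * (⨆ z, ENNReal.ofReal |f z|) + 2 ^ n * ⨆ z, ENNReal.ofReal |f z| :=
          add_le_add (ih _) (ih x)
      _ = 2 ^ (n + 1) * ⨆ z, ENNReal.ofReal |f z| := by ring

end IterDelta

theorem rpow_sub_le_mul_rpow_neg_add_rpow {u ε α δ : ℝ} (hu : 0 < u) (hε : 0 < ε)
    (hεα : ε ≤ α) (hδ0 : 0 < δ) (hδ1 : δ ≤ 1) :
    u ^ (ε - α) ≤ δ * u ^ (-α) + δ ^ (-α / ε) := by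
  rcases le_or_gt (u ^ ε) δ with hsmall | hlarge
  · have hsplit : u ^ (ε - α) = u ^ ε * u ^ (-α) := by
      rw [sub_eq_add_neg, Real.rpow_add hu]
    rw [hsplit]
    nlinarith [Real.rpow_pos_of_pos hu (-α), Real.rpow_pos_of_pos hδ0 (-α / ε)]
  · have hpow : u ^ (ε - α) = (u ^ ε) ^ ((ε - α) / ε) := by
      rw [← Real.rpow_mul hu.le, mul_div_cancel₀ _ hε.ne']
    calc u ^ (ε - α) ≤ δ ^ ((ε - α) / ε) := by
          rw [hpow]
          exact Real.rpow_le_rpow_of_nonpos hδ0 hlarge.le (div_nonpos_of_nonpos_of_nonneg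
            (by linarith) hε.le)
      _ ≤ δ ^ (-α / ε) :=
          Real.rpow_le_rpow_of_exponent_ge hδ0 hδ1
            (div_le_div_of_nonneg_right (by linarith) hε.le)
      _ ≤ δ * u ^ (-α) + δ ^ (-α / ε) :=
          le_add_of_nonneg_left (by positivity)

theorem rpow_add_mul_div_rpow_eq {r t : ℝ} (hr : 0 < r) (ht : 0 < t) (ϱ σ A : ℝ) :
    r ^ (ϱ + σ) * A / t ^ σ = r ^ ϱ * A * (t / r) ^ (-σ) := by
  rw [Real.rpow_add hr, Real.rpow_neg (div_pos ht hr).le, Real.div_rpow ht.le hr.le]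
  have := (Real.rpow_pos_of_pos ht σ).ne'
  have := (Real.rpow_pos_of_pos hr σ).ne'
  field_simp

theorem weighted_quotient_interpolation {r R t A α ε ϱ δ : ℝ} (hr : 0 < r) (hrR : r ≤ R)
    (ht : 0 < t) (hA : 0 ≤ A) (hε : 0 < ε) (hεα : ε ≤ α) (hϱ : 0 ≤ ϱ) (hδ0 : 0 < δ)
    (hδ1 : δ ≤ 1) :
    r ^ (ϱ + (α - ε)) * A / t ^ (α - ε) ≤
      δ * (r ^ (ϱ + α) * A / t ^ α) + R ^ ϱ * δ ^ (-α / ε) * A := by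
  have hB : 0 ≤ r ^ ϱ * A := by positivity
  rw [rpow_add_mul_div_rpow_eq hr ht, rpow_add_mul_div_rpow_eq hr ht, neg_sub]
  calc r ^ ϱ * A * (t / r) ^ (ε - α)
      ≤ r ^ ϱ * A * (δ * (t / r) ^ (-α) + δ ^ (-α / ε)) :=
        mul_le_mul_of_nonneg_left
          (rpow_sub_le_mul_rpow_neg_add_rpow (div_pos ht hr) hε hεα hδ0 hδ1) hB
    _ = δ * (r ^ ϱ * A * (t / r) ^ (-α)) + r ^ ϱ * δ ^ (-α / ε) * A := by ring
    _ ≤ δ * (r ^ ϱ * A * (t / r) ^ (-α)) + R ^ ϱ * δ ^ (-α / ε) * A := by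
        gcongr

theorem le_weightedSeminorm {d : ℕ} {σ κ : ℝ} {f : Ed d → ℝ} {x h : Ed d} (hx : ‖x‖ < 2)
    (hh : 0 < ‖h‖) (hhx : ‖h‖ ≤ (2 - ‖x‖) / 4) :
    ENNReal.ofReal ((2 - ‖x‖) ^ (κ + σ) * |iterDelta h 3 f x| / ‖h‖ ^ σ) ≤
      weightedSeminorm σ κ f :=
  le_iSup₂_of_le x hx <| le_iSup₂_of_le h hh <| le_iSup_of_le hhx le_rfl

theorem weighted_seminorm_interpolation_general {d : ℕ} (α ε ϱ δ : ℝ)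
    (hε : ε ∈ Set.Ioo (0 : ℝ) α) (hϱ : 0 < ϱ)
    (hδ : δ ∈ Set.Ioc (0 : ℝ) (1 / 4)) (f : Ed d → ℝ) :
    weightedSeminorm (α - ε) ϱ f ≤
      ENNReal.ofReal δ * weightedSeminorm α ϱ f +
        ENNReal.ofReal (8 * 2 ^ ϱ * δ ^ (-α / ε)) * ⨆ z, ENNReal.ofReal |f z| := by
  obtain ⟨hε0, hεα⟩ := hε
  obtain ⟨hδ0, hδ4⟩ := hδ
  refine iSup₂_le fun x hx => iSup₂_le fun h hh => iSup_le fun hhx => ?_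
  have hr : 0 < 2 - ‖x‖ := by linarith
  have hr2 : 2 - ‖x‖ ≤ 2 := by linarith [norm_nonneg x]
  have hC : (0 : ℝ) ≤ 2 ^ ϱ * δ ^ (-α / ε) := by positivity
  calc ENNReal.ofReal ((2 - ‖x‖) ^ (ϱ + (α - ε)) * |iterDelta h 3 f x| / ‖h‖ ^ (α - ε))
      ≤ ENNReal.ofReal (δ * ((2 - ‖x‖) ^ (ϱ + α) * |iterDelta h 3 f x| / ‖h‖ ^ α) +
          2 ^ ϱ * δ ^ (-α / ε) * |iterDelta h 3 f x|) :=
        ENNReal.ofReal_le_ofReal <| weighted_quotient_interpolation hr hr2 hh (abs_nonneg _)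
          hε0 hεα.le hϱ.le hδ0 (by linarith)
    _ ≤ ENNReal.ofReal δ *
          ENNReal.ofReal ((2 - ‖x‖) ^ (ϱ + α) * |iterDelta h 3 f x| / ‖h‖ ^ α) +
        ENNReal.ofReal (2 ^ ϱ * δ ^ (-α / ε)) * ENNReal.ofReal |iterDelta h 3 f x| := by
        rw [← ENNReal.ofReal_mul hδ0.le, ← ENNReal.ofReal_mul hC]
        exact ENNReal.ofReal_add_le
    _ ≤ ENNReal.ofReal δ * weightedSeminorm α ϱ f +
        ENNReal.ofReal (2 ^ ϱ * δ ^ (-α / ε)) * (2 ^ 3 * ⨆ z, ENNReal.ofReal |f z|) := by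
        gcongr
        · exact le_weightedSeminorm hx hh hhx
        · exact ofReal_abs_iterDelta_le h 3 f x
    _ = ENNReal.ofReal δ * weightedSeminorm α ϱ f +
        ENNReal.ofReal (8 * 2 ^ ϱ * δ ^ (-α / ε)) * ⨆ z, ENNReal.ofReal |f z| := by
        rw [mul_assoc 8, ENNReal.ofReal_mul (show (0 : ℝ) ≤ 8 by norm_num),
          ENNReal.ofReal_ofNat]
        ring

/-- inequality (3.13): interpolation estimate for the weighted seminorms,
`|f|_{B(0,2),α−ε,ϱ} ≤ δ |f|_{B(0,2),α,ϱ} + 8 · 2^ϱ · δ^{−α/ε} ‖f‖_∞`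
for `α ∈ (0,3)`, `ε ∈ (0,α)`, `ϱ > 0` and `δ ∈ (0,1/4]`. -/
theorem weighted_seminorm_interpolation {d : ℕ} (hd : 1 ≤ d) (α ε ϱ δ : ℝ)
    (hα : α ∈ Set.Ioo (0 : ℝ) 3) (hε : ε ∈ Set.Ioo (0 : ℝ) α) (hϱ : 0 < ϱ)
    (hδ : δ ∈ Set.Ioc (0 : ℝ) (1 / 4)) (f : Ed d → ℝ) (hf : ∃ M, ∀ z, |f z| ≤ M) :
    weightedSeminorm (α - ε) ϱ f ≤
      ENNReal.ofReal δ * weightedSeminorm α ϱ f +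
        ENNReal.ofReal (8 * 2 ^ ϱ * δ ^ (-α / ε)) * ⨆ z, ENNReal.ofReal |f z| :=
  weighted_seminorm_interpolation_general α ε ϱ δ hε hϱ hδ f

end
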